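/- arXiv:2404.04027 — 2 statements merged into one kernel-verified Lean document; each statement's English description precedes it below -/
import Mathlib

section
/- Let γ : [a,b] → ℝ³ be a smooth arc-length parameterized curve with T = γ', and suppose there exist constants a, b ∈ ℝ³ and a smooth ϱ : [a,b] → ℝ with ϱ > 0 such that ϱ γ'' = (a × γ + b) × γ'. Then the function μ(s) := ⟨a × γ(s) + b, T(s)⟩ is constant. -/
noncomputable def cross3 (u v : EuclideanSpace ℝ (Fin 3)) : EuclideanSpace ℝ (Fin 3) :=
  WithLp.toLp 2 ![u 1 * v 2 - u 2 * v 1, u 2 * v 0 - u 0 * v 2, u 0 * v 1 - u 1 * v 0]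

theorem mu_is_constant
    (a b : ℝ) (γ : ℝ → EuclideanSpace ℝ (Fin 3))
    (hγ : ContDiff ℝ (⊤ : ℕ∞) γ)
    (hunit : ∀ s : ℝ, ‖deriv γ s‖ = 1)
    (T : ℝ → EuclideanSpace ℝ (Fin 3)) (hT : T = deriv γ)
    (A B : EuclideanSpace ℝ (Fin 3))
    (ϱ : ℝ → ℝ) (hϱ : ContDiff ℝ (⊤ : ℕ∞) ϱ) (hϱpos : ∀ s : ℝ, 0 < ϱ s)
    (heq : ∀ s ∈ Set.Icc a b,
      ϱ s • deriv (deriv γ) s = cross3 (cross3 A (γ s) + B) (deriv γ s)) :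
    ∀ s ∈ Set.Icc a b, ∀ t ∈ Set.Icc a b,
      (inner ℝ (cross3 A (γ s) + B) (T s) : ℝ) =
        (inner ℝ (cross3 A (γ t) + B) (T t) : ℝ) := by
  subst hT
  have hsm : ContDiff ℝ ((⊤ : ℕ∞) : WithTop ℕ∞) γ := hγ.of_le (by simp)
  have hdiff : Differentiable ℝ γ := hsm.differentiable (by norm_num)
  have hγ' : ContDiff ℝ ((⊤ : ℕ∞) : WithTop ℕ∞) (deriv γ) := (contDiff_infty_iff_deriv.mp hsm).2
  have hdiff' : Differentiable ℝ (deriv γ) := hγ'.differentiable (by norm_num)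
  have hp : ∀ (i : Fin 3) (s : ℝ), HasDerivAt (fun t => γ t i) (deriv γ s i) s := fun i s =>
    (EuclideanSpace.proj i : EuclideanSpace ℝ (Fin 3) →L[ℝ] ℝ).hasFDerivAt.comp_hasDerivAt s
      (hdiff s).hasDerivAt
  have hd : ∀ (i : Fin 3) (s : ℝ), HasDerivAt (fun t => deriv γ t i) (deriv (deriv γ) s i) s :=
    fun i s =>
    (EuclideanSpace.proj i : EuclideanSpace ℝ (Fin 3) →L[ℝ] ℝ).hasFDerivAt.comp_hasDerivAt s
      (hdiff' s).hasDerivAt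
  set F : ℝ → ℝ := fun t =>
    (A 1 * γ t 2 - A 2 * γ t 1 + B 0) * deriv γ t 0 +
    (A 2 * γ t 0 - A 0 * γ t 2 + B 1) * deriv γ t 1 +
    (A 0 * γ t 1 - A 1 * γ t 0 + B 2) * deriv γ t 2 with hFdef
  have hf : ∀ t, (inner ℝ (cross3 A (γ t) + B) (deriv γ t) : ℝ) = F t := by
    intro t
    simp [F, cross3, PiLp.inner_apply, Fin.sum_univ_three, RCLike.inner_apply, conj_trivial,
      PiLp.add_apply]
    ring
  have hzero : ∀ s ∈ Set.Icc a b, HasDerivAt F 0 s := by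
    intro s hs
    have hF := ((((((hp 2 s).const_mul (A 1)).sub ((hp 1 s).const_mul (A 2))).add_const (B 0)).mul
        (hd 0 s)).add
      (((((hp 0 s).const_mul (A 2)).sub ((hp 2 s).const_mul (A 0))).add_const (B 1)).mul
        (hd 1 s))).add
      (((((hp 1 s).const_mul (A 0)).sub ((hp 0 s).const_mul (A 1))).add_const (B 2)).mul
        (hd 2 s))
    refine hF.congr_deriv (Eq.symm ?_)
    have hcomp := heq s hs
    have c0 := congrArg (fun v => v 0) hcomp
    have c1 := congrArg (fun v => v 1) hcomp
    have c2 := congrArg (fun v => v 2) hcomp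
    simp [cross3, PiLp.smul_apply, PiLp.add_apply, smul_eq_mul] at c0 c1 c2
    have hr : ϱ s ≠ 0 := (hϱpos s).ne'
    symm
    apply mul_left_cancel₀ hr
    rw [mul_zero]
    simp only [Pi.sub_apply]
    linear_combination (A 1 * γ s 2 - A 2 * γ s 1 + B 0) * c0 +
      (A 2 * γ s 0 - A 0 * γ s 2 + B 1) * c1 + (A 0 * γ s 1 - A 1 * γ s 0 + B 2) * c2
  have hcγ : ∀ i : Fin 3, Continuous fun t => γ t i := fun i =>
    (EuclideanSpace.proj i : EuclideanSpace ℝ (Fin 3) →L[ℝ] ℝ).continuous.comp hγ.continuous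
  have hcd : ∀ i : Fin 3, Continuous fun t => deriv γ t i := fun i =>
    (EuclideanSpace.proj i : EuclideanSpace ℝ (Fin 3) →L[ℝ] ℝ).continuous.comp hγ'.continuous
  have hcont : Continuous F := by
    apply Continuous.add
    apply Continuous.add
    all_goals
      exact (((continuous_const.mul (by apply_rules : Continuous _)).sub
        (continuous_const.mul (by apply_rules : Continuous _))).add continuous_const).mul
        (by apply_rules : Continuous _)
  have key : ∀ x ∈ Set.Icc a b, F x = F a :=
    constant_of_has_deriv_right_zero hcont.continuousOn
      (fun x hx => (hzero x (Set.Ico_subset_Icc_self hx)).hasDerivWithinAt)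
  intro s hs t ht
  rw [hf, hf, key s hs, key t ht]
end

section
/- Let γ : [a,b] → ℝ³ be a smooth arc-length parameterized curve with T = γ', ϱ : [a,b] → ℝ smooth, and a ∈ ℝ³, μ ∈ ℝ constants. If ϱ T'' - ϱ⟨T'', T⟩T + ϱ' T' + a - ⟨a, T⟩T - μ (T × T') = 0 on [a,b], then the ℝ³-valued function s ↦ ϱ(s) (T'(s) × T(s)) + a × γ(s) - μ T(s) is constant. -/
lemma inner3 (u v : EuclideanSpace ℝ (Fin 3)) :
    (inner ℝ u v : ℝ) = u 0 * v 0 + u 1 * v 1 + u 2 * v 2 := by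
  simp [PiLp.inner_apply, Fin.sum_univ_three]; ring

lemma cross3_self (u : EuclideanSpace ℝ (Fin 3)) : cross3 u u = 0 := by
  ext i; fin_cases i <;> simp [cross3] <;> ring

lemma zero_cross3 (u : EuclideanSpace ℝ (Fin 3)) : cross3 0 u = 0 := by
  ext i; fin_cases i <;> simp [cross3]

lemma key (v w z A : EuclideanSpace ℝ (Fin 3)) (ρ ρ' μ : ℝ)
    (h1 : (inner ℝ w v : ℝ) = 0) (h2 : (inner ℝ v v : ℝ) = 1) :
    cross3 (ρ • z - (ρ * (inner ℝ z v : ℝ)) • v + ρ' • w + A - (inner ℝ A v : ℝ) • v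
      - μ • cross3 v w) v
    = ρ' • cross3 w v + ρ • cross3 z v + cross3 A v - μ • w := by
  rw [inner3] at h1 h2
  ext i
  fin_cases i
  · simp [cross3, inner3, PiLp.add_apply, PiLp.sub_apply, PiLp.smul_apply, smul_eq_mul]
    linear_combination (-μ * w 0) * h2 + (μ * v 0) * h1
  · simp [cross3, inner3, PiLp.add_apply, PiLp.sub_apply, PiLp.smul_apply, smul_eq_mul]
    linear_combination (-μ * w 1) * h2 + (μ * v 1) * h1
  · simp [cross3, inner3, PiLp.add_apply, PiLp.sub_apply, PiLp.smul_apply, smul_eq_mul]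
    linear_combination (-μ * w 2) * h2 + (μ * v 2) * h1

noncomputable def crossl : EuclideanSpace ℝ (Fin 3) →ₗ[ℝ] EuclideanSpace ℝ (Fin 3) →ₗ[ℝ] EuclideanSpace ℝ (Fin 3) :=
  LinearMap.mk₂ ℝ cross3
    (by intro u v w; ext i; fin_cases i <;> simp [cross3, PiLp.add_apply] <;> ring)
    (by intro c u w; ext i; fin_cases i <;> simp [cross3, PiLp.smul_apply] <;> ring)
    (by intro u v w; ext i; fin_cases i <;> simp [cross3, PiLp.add_apply] <;> ring)
    (by intro c u w; ext i; fin_cases i <;> simp [cross3, PiLp.smul_apply] <;> ring)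

noncomputable def crossL : EuclideanSpace ℝ (Fin 3) →L[ℝ] EuclideanSpace ℝ (Fin 3) →L[ℝ] EuclideanSpace ℝ (Fin 3) :=
  LinearMap.toContinuousLinearMap
    { toFun := fun u => LinearMap.toContinuousLinearMap (crossl u)
      map_add' := by intro u v; ext w : 1; simp
      map_smul' := by intro c u; ext w : 1; simp }

lemma crossL_apply (u v : EuclideanSpace ℝ (Fin 3)) : crossL u v = cross3 u v := rfl

lemma HasDerivAt.cross {u v : ℝ → EuclideanSpace ℝ (Fin 3)} {u' v' : EuclideanSpace ℝ (Fin 3)} {x : ℝ}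
    (hu : HasDerivAt u u' x) (hv : HasDerivAt v v' x) :
    HasDerivAt (fun s => cross3 (u s) (v s)) (cross3 u' (v x) + cross3 (u x) v') x := by
  have hc : HasDerivAt (fun s => crossL (u s)) (crossL u') x :=
    crossL.hasFDerivAt.comp_hasDerivAt x hu
  simpa [crossL_apply] using hc.clm_apply hv

theorem first_integral_of_EL_equation
    (a b : ℝ) (γ : ℝ → EuclideanSpace ℝ (Fin 3))
    (hγ : ContDiff ℝ (⊤ : ℕ∞) γ)
    (hunit : ∀ s : ℝ, ‖deriv γ s‖ = 1)
    (T : ℝ → EuclideanSpace ℝ (Fin 3)) (hT : T = deriv γ)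
    (ϱ : ℝ → ℝ) (hϱ : ContDiff ℝ (⊤ : ℕ∞) ϱ)
    (A : EuclideanSpace ℝ (Fin 3)) (μ : ℝ)
    (heq : ∀ s ∈ Set.Icc a b,
      ϱ s • deriv (deriv T) s
        - (ϱ s * (inner ℝ (deriv (deriv T) s) (T s) : ℝ)) • T s
        + deriv ϱ s • deriv T s
        + A - (inner ℝ A (T s) : ℝ) • T s
        - μ • cross3 (T s) (deriv T s) = 0) :
    ∀ s ∈ Set.Icc a b, ∀ t ∈ Set.Icc a b,
      ϱ s • cross3 (deriv T s) (T s) + cross3 A (γ s) - μ • T s =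
        ϱ t • cross3 (deriv T t) (T t) + cross3 A (γ t) - μ • T t := by
  -- smoothness facts
  have hγ2 : ContDiff ℝ (⊤ : ℕ∞) γ := hγ.of_le (by simp)
  have hTsm : ContDiff ℝ (⊤ : ℕ∞) T := by
    rw [hT]; exact (contDiff_infty_iff_deriv.mp hγ2).2
  have hT'sm : ContDiff ℝ (⊤ : ℕ∞) (deriv T) := (contDiff_infty_iff_deriv.mp hTsm).2
  have hγd : ∀ s, HasDerivAt γ (T s) s := fun s => by
    rw [hT]; exact (hγ2.differentiable (by simp) s).hasDerivAt
  have hTd : ∀ s, HasDerivAt T (deriv T s) s := fun s =>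
    (hTsm.differentiable (by simp) s).hasDerivAt
  have hT'd : ∀ s, HasDerivAt (deriv T) (deriv (deriv T) s) s := fun s =>
    (hT'sm.differentiable (by simp) s).hasDerivAt
  have hϱd : ∀ s, HasDerivAt ϱ (deriv ϱ s) s := fun s =>
    (hϱ.differentiable (by simp) s).hasDerivAt
  -- unit tangent facts
  have h2 : ∀ s, (inner ℝ (T s) (T s) : ℝ) = 1 := fun s => by
    rw [real_inner_self_eq_norm_sq, hT, hunit s]; norm_num
  have h1 : ∀ s, (inner ℝ (deriv T s) (T s) : ℝ) = 0 := by
    intro s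
    have hg : HasDerivAt (fun t => (inner ℝ (T t) (T t) : ℝ))
        ((inner ℝ (T s) (deriv T s) : ℝ) + (inner ℝ (deriv T s) (T s) : ℝ)) s :=
      (hTd s).inner ℝ (hTd s)
    have hg' : HasDerivAt (fun t : ℝ => (inner ℝ (T t) (T t) : ℝ)) 0 s := by
      have : (fun t : ℝ => (inner ℝ (T t) (T t) : ℝ)) = fun _ => (1 : ℝ) := funext fun t => h2 t
      rw [this]; exact hasDerivAt_const s 1
    have := hg.unique hg'
    rw [real_inner_comm] at this
    linarith
  -- the first integral and its derivative
  set F : ℝ → EuclideanSpace ℝ (Fin 3) :=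
    fun s => ϱ s • cross3 (deriv T s) (T s) + cross3 A (γ s) - μ • T s with hF
  have hFd : ∀ s, HasDerivAt F
      (ϱ s • (cross3 (deriv (deriv T) s) (T s) + cross3 (deriv T s) (deriv T s))
        + deriv ϱ s • cross3 (deriv T s) (T s)
        + (cross3 0 (γ s) + cross3 A (T s)) - μ • deriv T s) s := fun s =>
    (((hϱd s).smul ((hT'd s).cross (hTd s))).add
      ((hasDerivAt_const s A).cross (hγd s))).sub ((hTd s).const_smul μ)
  have hFd' : ∀ s ∈ Set.Icc a b, HasDerivAt F 0 s := by
    intro s hs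
    have hz := heq s hs
    have hk := key (T s) (deriv T s) (deriv (deriv T) s) A (ϱ s) (deriv ϱ s) μ (h1 s) (h2 s)
    rw [hz, zero_cross3] at hk
    have e : ϱ s • (cross3 (deriv (deriv T) s) (T s) + cross3 (deriv T s) (deriv T s))
        + deriv ϱ s • cross3 (deriv T s) (T s)
        + (cross3 0 (γ s) + cross3 A (T s)) - μ • deriv T s = 0 := by
      rw [cross3_self, zero_cross3, smul_add, smul_zero, add_zero, zero_add]
      rw [show ϱ s • cross3 (deriv (deriv T) s) (T s) + deriv ϱ s • cross3 (deriv T s) (T s)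
            + cross3 A (T s) - μ • deriv T s
          = deriv ϱ s • cross3 (deriv T s) (T s) + ϱ s • cross3 (deriv (deriv T) s) (T s)
            + cross3 A (T s) - μ • deriv T s from by abel, ← hk]
    rw [← e]; exact hFd s
  -- conclude constancy
  have hconst : ∀ x ∈ Set.Icc a b, F x = F a := by
    apply constant_of_derivWithin_zero
    · exact fun x hx => ((hFd x).differentiableAt.differentiableWithinAt)
    · intro x hx
      have hab : a < b := lt_of_le_of_lt hx.1 hx.2
      exact ((hFd' x (Set.mem_Icc_of_Ico hx)).hasDerivWithinAt).derivWithin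
        (uniqueDiffOn_Icc hab x (Set.mem_Icc_of_Ico hx))
  intro s hs t ht
  have := (hconst s hs).trans (hconst t ht).symm
  simpa [hF] using this
end
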